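/- Let F be a field and n ≥ 3. There are constants c_n > 0 and C_n, depending only on n, with the following property: let 𝔏 be a generic finite collection of lines in F^n, let λ ≥ 1, and let J_λ(𝔏) = {x ∈ F^n : N(x) ≥ λ}. Then there exists an assignment giving to each x ∈ J_λ(𝔏) a set S(x) ⊆ 𝔏 of lines, each containing x, with |S(x)| ≥ c_n · λ^{1/n}, such that for every line l ∈ 𝔏, the number of points x ∈ J_λ(𝔏) with l ∈ S(x) is at most C_n · |J_λ(𝔏)|^{1/n}. -/

import Mathlib

/-- A line in `F^n`: a set of the form `{v + t • b : t ∈ F}` with `b ≠ 0`. -/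
def IsLine (F : Type*) [Field F] {n : ℕ} (l : Set (Fin n → F)) : Prop :=
  ∃ v b : Fin n → F, b ≠ 0 ∧ l = {x | ∃ t : F, x = v + t • b}

/-- `b` is a direction of the line `l`. -/
def IsDirection (F : Type*) [Field F] {n : ℕ} (b : Fin n → F) (l : Set (Fin n → F)) : Prop :=
  b ≠ 0 ∧ ∃ v : Fin n → F, l = {x | ∃ t : F, x = v + t • b}

/-- The lines `l 0, …, l (n-1)` form a joint at `x`: each passes through `x` and
their directions span `F^n`. -/
def FormsJoint (F : Type*) [Field F] {n : ℕ} (l : Fin n → Set (Fin n → F))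
    (x : Fin n → F) : Prop :=
  (∀ i, x ∈ l i) ∧ ∃ b : Fin n → Fin n → F,
    (∀ i, IsDirection F (b i) (l i)) ∧ Submodule.span F (Set.range b) = ⊤

/-- `x` is a joint of the collection `𝔏`: there are (at least) `n` distinct lines of `𝔏`
through `x` whose directions span `F^n`. -/
def IsJoint (F : Type*) [Field F] {n : ℕ} (𝔏 : Set (Set (Fin n → F)))
    (x : Fin n → F) : Prop :=
  ∃ l : Fin n → Set (Fin n → F), Function.Injective l ∧ (∀ i, l i ∈ 𝔏) ∧ FormsJoint F l x

/-- The multiplicity `N(x)`: the number of `n`-tuples of lines of `𝔏` forming a joint at `x`. -/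
noncomputable def jointMult (F : Type*) [Field F] {n : ℕ} (𝔏 : Set (Set (Fin n → F)))
    (x : Fin n → F) : ℕ :=
  Set.ncard {l : Fin n → Set (Fin n → F) | (∀ i, l i ∈ 𝔏) ∧ FormsJoint F l x}

/-- `𝔏` is generic: whenever `n` distinct lines of `𝔏` pass through a common point,
they form a joint there. -/
def Generic (F : Type*) [Field F] {n : ℕ} (𝔏 : Set (Set (Fin n → F))) : Prop :=
  ∀ (l : Fin n → Set (Fin n → F)) (x : Fin n → F), Function.Injective l →
    (∀ i, l i ∈ 𝔏) → (∀ i, x ∈ l i) → FormsJoint F l x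

/-!
The polynomial method. Work over the algebraic closure `K` of `F`. A set `J` of fewer than
`(k+1)^n` points lies in the zero set of a nonzero polynomial of degree `≤ n k`; let `p` be one of
minimal degree. Some `x ∈ J` has fewer than `n` lines of `𝔏` through it on which `p` vanishes
identically: otherwise, by genericity, at every point of `J` the directions of such lines span
`F^n`, so every `∂ⱼ p` vanishes on `J`, hence `∂ⱼ p = 0` by minimality; then `p` is constant
(characteristic `0`) or the `q`-th power of a polynomial of lower degree vanishing on `J`
(characteristic `q`, `K` perfect), both impossible. Let `x` choose the lines through it on which
`p` does not vanish; each of them meets `J` in at most `deg p ≤ n k` points. Removing `x` and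
inducting yields the assignment. With `k = ⌊|J|^{1/n}⌋` and `N(x) ≤ d(x)^n`, where `d(x) ≥ n` is
the number of lines through `x`, at least `d(x) - n + 1 ≥ d(x)/n ≥ λ^{1/n}/n` lines are chosen.
-/

open scoped Classical

section Lines

variable {F : Type*} [Field F] {n : ℕ}

theorem IsDirection.eq_setOf_add_smul {b x : Fin n → F} {l : Set (Fin n → F)}
    (hb : IsDirection F b l) (hx : x ∈ l) : l = {y | ∃ t : F, y = x + t • b} := by
  obtain ⟨-, v, rfl⟩ := hb
  obtain ⟨s, rfl⟩ := hx
  ext y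
  constructor
  · rintro ⟨t, rfl⟩
    exact ⟨t - s, by rw [sub_smul]; abel⟩
  · rintro ⟨t, rfl⟩
    exact ⟨s + t, by rw [add_smul, add_assoc]⟩

theorem IsDirection.exists_eq_smul {b b' : Fin n → F} {l : Set (Fin n → F)}
    (hb : IsDirection F b l) (hb' : IsDirection F b' l) : ∃ s : F, b' = s • b := by
  obtain ⟨-, v, hl⟩ := hb'
  have hv : v ∈ l := hl ▸ ⟨0, by simp⟩
  have hvb : v + b' ∈ l := hl ▸ ⟨1, by simp⟩
  rw [hb.eq_setOf_add_smul hv] at hvb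
  obtain ⟨s, hs⟩ := hvb
  exact ⟨s, add_left_cancel hs⟩

theorem IsLine.isDirection_sub {l : Set (Fin n → F)} (hl : IsLine F l) {x y : Fin n → F}
    (hx : x ∈ l) (hy : y ∈ l) (hxy : x ≠ y) : IsDirection F (y - x) l := by
  obtain ⟨v, b, -, rfl⟩ := hl
  obtain ⟨s, rfl⟩ := hx
  obtain ⟨t, rfl⟩ := hy
  have hts : t - s ≠ 0 := sub_ne_zero.2 fun h => hxy (by rw [h])
  have hsub : v + t • b - (v + s • b) = (t - s) • b := by rw [sub_smul]; abel
  refine ⟨sub_ne_zero.2 hxy.symm, v, ?_⟩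
  ext z
  simp only [Set.mem_ofPred_eq, hsub, smul_smul]
  constructor
  · rintro ⟨u, rfl⟩
    exact ⟨u / (t - s), by rw [div_mul_cancel₀ _ hts]⟩
  · rintro ⟨u, rfl⟩
    exact ⟨u * (t - s), rfl⟩

theorem IsLine.eq_of_mem_of_mem {l m : Set (Fin n → F)} (hl : IsLine F l) (hm : IsLine F m)
    {x y : Fin n → F} (hxy : x ≠ y) (hxl : x ∈ l) (hyl : y ∈ l) (hxm : x ∈ m) (hym : y ∈ m) :
    l = m := by
  rw [(hl.isDirection_sub hxl hyl hxy).eq_setOf_add_smul hxl,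
    (hm.isDirection_sub hxm hym hxy).eq_setOf_add_smul hxm]

theorem span_range_ne_top_of_eq_smul {b : Fin n → Fin n → F} {i j : Fin n} (hij : i ≠ j)
    {s : F} (h : b i = s • b j) : Submodule.span F (Set.range b) ≠ ⊤ := fun htop => by
  have hli := linearIndependent_of_top_le_span_of_card_eq_finrank htop.ge (by simp)
  refine hli.notMem_span_image (s := {j}) (by simpa using hij) ?_
  rw [h, Set.image_singleton]
  exact Submodule.smul_mem _ _ (Submodule.mem_span_singleton_self _)

theorem FormsJoint.injective {l : Fin n → Set (Fin n → F)} {x : Fin n → F}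
    (h : FormsJoint F l x) : Function.Injective l := by
  obtain ⟨-, b, hb, hspan⟩ := h
  intro i j hij
  by_contra hne
  obtain ⟨s, hs⟩ := (hb j).exists_eq_smul (hij ▸ hb i)
  exact span_range_ne_top_of_eq_smul hne hs hspan

end Lines

namespace MvPolynomial

section RestrictLine

open Polynomial

variable {σ R : Type*} [CommRing R]

noncomputable def restrictLine (v b : σ → R) : MvPolynomial σ R →ₐ[R] R[X] :=
  aeval fun i => Polynomial.C (v i) + Polynomial.C (b i) * Polynomial.X

variable (v b : σ → R) (p : MvPolynomial σ R)

theorem restrictLine_X (i : σ) :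
    restrictLine v b (X i) = Polynomial.C (v i) + Polynomial.C (b i) * Polynomial.X :=
  aeval_X _ _

theorem eval_restrictLine (t : R) : (restrictLine v b p).eval t = eval (v + t • b) p := by
  induction p using MvPolynomial.induction_on with
  | C a => simp
  | add p q hp hq => simp [hp, hq]
  | mul_X p i hp =>
    simp only [map_mul, Polynomial.eval_mul, hp, restrictLine_X, eval_X]
    simp [mul_comm t]

theorem natDegree_restrictLine_le : (restrictLine v b p).natDegree ≤ p.totalDegree := by
  conv_lhs => rw [p.as_sum, map_sum]
  refine natDegree_sum_le_of_forall_le _ _ fun s hs => ?_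
  rw [restrictLine, aeval_monomial, Polynomial.algebraMap_eq]
  refine (natDegree_C_mul_le _ _).trans ((natDegree_prod_le _ _).trans ?_)
  refine (Finset.sum_le_sum (g := s) fun i _ => ?_).trans (le_totalDegree hs)
  refine (natDegree_pow_le_of_le (s i) ?_).trans (mul_one _).le
  rw [add_comm]
  exact natDegree_linear_le

theorem derivative_restrictLine [Fintype σ] :
    derivative (restrictLine v b p) =
      ∑ i, Polynomial.C (b i) * restrictLine v b (pderiv i p) := by
  induction p using MvPolynomial.induction_on with
  | C a => simp
  | add p q hp hq => simp [hp, hq, Finset.sum_add_distrib, mul_add]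
  | mul_X p i hp =>
    have hX : ∀ j, pderiv j (p * X i) = pderiv j p * X i + if i = j then p else 0 := fun j => by
      rw [(pderiv j).leibniz, pderiv_X, Pi.single_apply, smul_eq_mul, smul_eq_mul, mul_ite,
        mul_one, mul_zero, add_comm, mul_comm]
    rw [map_mul, derivative_mul, hp, Finset.sum_mul]
    simp only [hX, map_add, map_mul, mul_add, Finset.sum_add_distrib, mul_assoc]
    congr 1
    rw [restrictLine_X]
    simp only [apply_ite (restrictLine v b), map_zero, mul_ite, mul_zero, Finset.sum_ite_eq,
      Finset.mem_univ, if_true]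
    rw [derivative_add, derivative_C, derivative_C_mul_X, zero_add, mul_comm]

theorem eval_zero_derivative_restrictLine [Fintype σ] :
    (derivative (restrictLine v b p)).eval 0 = ∑ i, b i * eval v (pderiv i p) := by
  simp [derivative_restrictLine, Polynomial.eval_finsetSum, eval_restrictLine]

end RestrictLine

variable {σ K : Type*} [Field K]

theorem exists_ne_zero_totalDegree_le_eval_eq_zero [Fintype σ] (T : Finset (σ → K)) {k : ℕ}
    (hT : T.card < (k + 1) ^ Fintype.card σ) :
    ∃ p : MvPolynomial σ K, p ≠ 0 ∧ p.totalDegree ≤ Fintype.card σ * k ∧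
      ∀ x ∈ T, eval x p = 0 := by
  let mono : (σ → Fin (k + 1)) → MvPolynomial σ K := fun α =>
    monomial (Finsupp.equivFunOnFinite.symm fun i => (α i : ℕ)) 1
  have hmono : LinearIndependent K mono := by
    refine (basisMonomials σ K).linearIndependent.comp _ fun α β h => ?_
    funext i
    exact Fin.ext (congrFun (congrArg (⇑) h) i)
  have hdep : ¬ LinearIndependent K fun α (x : T) => eval (x : σ → K) (mono α) := fun h => by
    have := h.fintype_card_le_finrank
    simp at this
    omega
  obtain ⟨g, hg, α, hα⟩ := Fintype.not_linearIndependent_iff.mp hdep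
  refine ⟨∑ α, g α • mono α, fun h0 => hα (Fintype.linearIndependent_iff.mp hmono g h0 α), ?_,
    fun x hx => by simpa [eval_sum] using congrFun hg ⟨x, hx⟩⟩
  refine (totalDegree_finsetSum _ _).trans (Finset.sup_le fun α _ => ?_)
  refine (totalDegree_smul_le _ _).trans ((totalDegree_monomial_le _ _).trans ?_)
  have hsum := Finset.sum_le_sum fun i (_ : i ∈ Finset.univ) => Nat.lt_succ_iff.mp (α i).isLt
  simpa [Finsupp.sum_fintype] using hsum

variable {p : MvPolynomial σ K}

theorem natCast_mul_coeff_eq_zero_of_pderiv_eq_zero (h : ∀ j, pderiv j p = 0)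
    (α : σ →₀ ℕ) (j : σ) : (α j : K) * coeff α p = 0 := by
  rcases Nat.eq_zero_or_pos (α j) with hα | hα
  · simp [hα]
  have hsplit : α - Finsupp.single j 1 + Finsupp.single j 1 = α :=
    tsub_add_cancel_of_le (Finsupp.single_le_iff.mpr hα)
  have := coeff_pderiv (i := j) p (α - Finsupp.single j 1)
  rw [h j, coeff_zero, hsplit] at this
  rw [this, mul_comm]
  congr
  simp only [Finsupp.coe_tsub, Pi.sub_apply, Finsupp.single_eq_same]
  push_cast [Nat.cast_sub hα]
  ring

theorem totalDegree_eq_zero_of_pderiv_eq_zero [CharZero K] (h : ∀ j, pderiv j p = 0) :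
    p.totalDegree = 0 := by
  refine totalDegree_eq_zero_iff_eq_C.mpr (MvPolynomial.ext _ _ fun α => ?_)
  rw [coeff_C]
  split_ifs with hα
  · rw [hα]
  obtain ⟨j, hj⟩ : ∃ j, α j ≠ 0 := by
    by_contra! hall
    exact hα (Finsupp.ext hall).symm
  exact (mul_eq_zero.mp (natCast_mul_coeff_eq_zero_of_pderiv_eq_zero h α j)).resolve_left
    (Nat.cast_ne_zero.mpr hj)

theorem exists_pow_eq_of_pderiv_eq_zero (q : ℕ) [Fact q.Prime] [CharP K q] [PerfectRing K q]
    (h : ∀ j, pderiv j p = 0) : ∃ r : MvPolynomial σ K, r ^ q = p := by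
  have hdvd : ∀ α ∈ p.support, ∀ j, q ∣ α j := fun α hα j => by
    have := natCast_mul_coeff_eq_zero_of_pderiv_eq_zero h α j
    exact (CharP.cast_eq_zero_iff K q _).mp
      ((mul_eq_zero.mp this).resolve_right (mem_support_iff.mp hα))
  refine ⟨∑ α ∈ p.support,
    monomial (α.mapRange (· / q) (Nat.zero_div q)) ((frobeniusEquiv K q).symm (coeff α p)), ?_⟩
  conv_rhs => rw [p.as_sum]
  rw [sum_pow_char]
  refine Finset.sum_congr rfl fun α hα => ?_
  rw [monomial_pow, frobeniusEquiv_symm_pow_p]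
  congr
  ext j
  simp [Nat.mul_div_cancel' (hdvd α hα j)]

theorem totalDegree_pderiv_lt {j : σ} (h : pderiv j p ≠ 0) :
    (pderiv j p).totalDegree < p.totalDegree := by
  obtain ⟨β, hβ, hdeg⟩ := Finset.exists_mem_eq_sup _ (support_nonempty.mpr h)
    fun s : σ →₀ ℕ => s.sum fun _ e => e
  rw [totalDegree, hdeg]
  rw [mem_support_iff, coeff_pderiv] at hβ
  have := le_totalDegree (mem_support_iff.mpr (left_ne_zero_of_mul hβ))
  rw [Finsupp.sum_add_index' (fun _ => rfl) (fun _ _ _ => rfl), Finsupp.sum_single_index rfl]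
    at this
  omega

theorem totalDegree_pow_of_ne_zero {r : MvPolynomial σ K} (hr : r ≠ 0) (m : ℕ) :
    (r ^ m).totalDegree = m * r.totalDegree := by
  induction m with
  | zero => simp
  | succ m ih => rw [pow_succ, totalDegree_mul_of_isDomain (pow_ne_zero _ hr) hr, ih]; ring

theorem exists_totalDegree_lt_of_pderiv_eq_zero [PerfectField K] (hp : p.totalDegree ≠ 0)
    (h : ∀ j, pderiv j p = 0) :
    ∃ r : MvPolynomial σ K, r ≠ 0 ∧ r.totalDegree < p.totalDegree ∧
      ∀ z, eval z p = 0 → eval z r = 0 := by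
  obtain ⟨q, _⟩ := CharP.exists K
  rcases CharP.char_is_prime_or_zero K q with hq | rfl
  · have := Fact.mk hq
    obtain ⟨r, rfl⟩ := exists_pow_eq_of_pderiv_eq_zero q h
    have hr : r ≠ 0 := by rintro rfl; simp [zero_pow hq.ne_zero] at hp
    rw [totalDegree_pow_of_ne_zero hr] at hp ⊢
    refine ⟨r, hr, ?_, fun z hz => ?_⟩
    · have := hq.two_le
      have : r.totalDegree ≠ 0 := right_ne_zero_of_mul hp
      nlinarith [Nat.pos_of_ne_zero this]
    · rw [eval_pow] at hz
      exact pow_eq_zero_iff hq.ne_zero |>.mp hz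
  · have := CharP.charP_to_charZero K
    exact absurd (totalDegree_eq_zero_of_pderiv_eq_zero h) hp

end MvPolynomial

noncomputable def linesThrough {E : Type*} (𝔏 : Finset (Set E)) (x : E) : Finset (Set E) :=
  𝔏.filter (x ∈ ·)

theorem mem_linesThrough {E : Type*} {𝔏 : Finset (Set E)} {x : E} {l : Set E} :
    l ∈ linesThrough 𝔏 x ↔ l ∈ 𝔏 ∧ x ∈ l :=
  Finset.mem_filter

section Joints

variable {F : Type*} [Field F] {n : ℕ} (𝔏 : Finset (Set (Fin n → F))) (x : Fin n → F)

theorem jointMult_le_card_linesThrough_pow :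
    jointMult F ↑𝔏 x ≤ (linesThrough 𝔏 x).card ^ n := by
  have hsub : {l : Fin n → Set (Fin n → F) | (∀ i, l i ∈ (↑𝔏 : Set _)) ∧ FormsJoint F l x} ⊆
      ↑(Fintype.piFinset fun _ : Fin n => linesThrough 𝔏 x) := fun l ⟨hl𝔏, hlx, _⟩ => by
    simpa [mem_linesThrough] using fun i => ⟨hl𝔏 i, hlx i⟩
  calc jointMult F ↑𝔏 x ≤ (↑(Fintype.piFinset fun _ : Fin n => linesThrough 𝔏 x) : Set _).ncard :=
        Set.ncard_le_ncard hsub (Finset.finite_toSet _)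
    _ = (linesThrough 𝔏 x).card ^ n := by
        rw [Set.ncard_coe_finset, Fintype.card_piFinset, Finset.prod_const, Finset.card_univ,
          Fintype.card_fin]

theorem le_card_linesThrough (h : jointMult F ↑𝔏 x ≠ 0) : n ≤ (linesThrough 𝔏 x).card := by
  obtain ⟨l, hl𝔏, hl⟩ := Set.nonempty_of_ncard_ne_zero h
  calc n = (Finset.univ.image l).card := by rw [Finset.card_image_of_injective _ hl.injective]; simp
    _ ≤ (linesThrough 𝔏 x).card := Finset.card_le_card fun m hm => by
      obtain ⟨i, -, rfl⟩ := Finset.mem_image.mp hm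
      exact mem_linesThrough.mpr ⟨hl𝔏 i, hl.1 i⟩

theorem finite_setOf_jointMult_ne_zero (hL : ∀ l ∈ 𝔏, IsLine F l) (hn : 2 ≤ n) :
    {x : Fin n → F | jointMult F ↑𝔏 x ≠ 0}.Finite := by
  refine (((𝔏 ×ˢ 𝔏).filter fun lm => lm.1 ≠ lm.2).finite_toSet.biUnion
    (t := fun lm => lm.1 ∩ lm.2) fun lm hlm => ?_).subset fun x hx => ?_
  · obtain ⟨hlm𝔏, hne⟩ := Finset.mem_filter.mp hlm
    obtain ⟨hl, hm⟩ := Finset.mem_product.mp hlm𝔏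
    refine Set.Subsingleton.finite fun y hy z hz => ?_
    by_contra hyz
    exact hne ((hL _ hl).eq_of_mem_of_mem (hL _ hm) hyz hy.1 hz.1 hy.2 hz.2)
  · obtain ⟨l, hl, m, hm, hlm⟩ :=
      Finset.one_lt_card.mp ((le_card_linesThrough 𝔏 x hx).trans_lt' hn)
    rw [mem_linesThrough] at hl hm
    exact Set.mem_biUnion (x := (l, m)) (by simp [hl.1, hm.1, hlm]) ⟨hl.2, hm.2⟩

end Joints

section Vanishing

open MvPolynomial

variable {F K : Type*} [Field F] [Field K] {n : ℕ} (ι : F →+* K)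

theorem eq_zero_of_sum_mul_eq_zero_of_span_eq_top {σ τ : Type*} [Fintype σ] {b : τ → σ → F}
    (hspan : Submodule.span F (Set.range b) = ⊤) {g : σ → K}
    (h : ∀ i, ∑ j, ι (b i j) * g j = 0) (j : σ) : g j = 0 := by
  let := ι.toAlgebra
  let L : (σ → F) →ₗ[F] K := ∑ j, (LinearMap.proj j).smulRight (g j)
  have hL : ∀ v, L v = ∑ j, ι (v j) * g j := fun v => by
    simp [L, Algebra.smul_def, RingHom.algebraMap_toAlgebra]
  have hL0 : L = 0 := LinearMap.ext_on_range hspan fun i => by simp [hL, h]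
  simpa [hL, Pi.single_apply] using LinearMap.congr_fun hL0 (Pi.single j 1)

-- The restriction to `l` vanishes as a polynomial, not merely at the points of `l` (which is
-- weaker when `F` is finite).
def VanishesOnLine (p : MvPolynomial (Fin n) K) (l : Set (Fin n → F)) : Prop :=
  ∀ x ∈ l, ∀ b, IsDirection F b l → restrictLine (ι ∘ x) (ι ∘ b) p = 0

variable {ι} {p : MvPolynomial (Fin n) K}

theorem card_filter_mem_le_totalDegree {T : Finset (Fin n → F)}
    (hT : ∀ x ∈ T, eval (ι ∘ x) p = 0) {l : Set (Fin n → F)} (hl : ¬ VanishesOnLine ι p l) :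
    (T.filter (· ∈ l)).card ≤ p.totalDegree := by
  simp only [VanishesOnLine, not_forall] at hl
  obtain ⟨x, hx, b, hb, hq⟩ := hl
  have hparam : ∀ y ∈ l, ∃ t : F, y = x + t • b := fun y hy => by
    rwa [hb.eq_setOf_add_smul hx] at hy
  choose! t ht using hparam
  calc (T.filter (· ∈ l)).card = ((T.filter (· ∈ l)).image (ι ∘ t)).card := by
        refine (Finset.card_image_of_injOn fun y hy z hz hyz => ?_).symm
        rw [ht y (Finset.mem_filter.mp hy).2, ht z (Finset.mem_filter.mp hz).2,
          ι.injective hyz]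
    _ ≤ (restrictLine (ι ∘ x) (ι ∘ b) p).natDegree := by
        refine Polynomial.card_le_degree_of_subset_roots fun s hs => ?_
        obtain ⟨y, hy, rfl⟩ := Finset.mem_image.mp hs
        obtain ⟨hyT, hyl⟩ := Finset.mem_filter.mp hy
        rw [Polynomial.mem_roots hq, Polynomial.IsRoot, eval_restrictLine, ← hT y hyT]
        congr 2
        conv_rhs => rw [ht y hyl]
        funext i
        simp
    _ ≤ p.totalDegree := natDegree_restrictLine_le _ _ _

theorem eval_pderiv_eq_zero_of_formsJoint {l : Fin n → Set (Fin n → F)} {x : Fin n → F}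
    (hl : FormsJoint F l x) (hp : ∀ i, VanishesOnLine ι p (l i)) (j : Fin n) :
    eval (ι ∘ x) (pderiv j p) = 0 := by
  obtain ⟨hx, b, hb, hspan⟩ := hl
  refine eq_zero_of_sum_mul_eq_zero_of_span_eq_top ι (g := fun j => eval (ι ∘ x) (pderiv j p))
    hspan (fun i => ?_) j
  have := congrArg (fun q => (Polynomial.derivative q).eval 0) (hp i x (hx i) (b i) (hb i))
  simpa [eval_zero_derivative_restrictLine] using this

end Vanishing

section Selection

open MvPolynomial

variable {F K : Type*} [Field F] [Field K] {n : ℕ} {ι : F →+* K}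

theorem exists_mem_card_vanishesOnLine_lt [PerfectField K] {𝔏 : Finset (Set (Fin n → F))}
    (hgen : Generic F (↑𝔏 : Set (Set (Fin n → F)))) {T : Finset (Fin n → F)} (hT : T.Nonempty) {p : MvPolynomial (Fin n) K} (hp : p ≠ 0)
    (hpT : ∀ x ∈ T, eval (ι ∘ x) p = 0)
    (hmin : ∀ q : MvPolynomial (Fin n) K, q ≠ 0 → (∀ x ∈ T, eval (ι ∘ x) q = 0) →
      p.totalDegree ≤ q.totalDegree) :
    ∃ x ∈ T, ((linesThrough 𝔏 x).filter (VanishesOnLine ι p)).card < n := by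
  by_contra! hbad
  have hpderiv : ∀ j, pderiv j p = 0 := fun j => by
    by_contra hj
    refine (hmin _ hj fun x hx => ?_).not_gt (totalDegree_pderiv_lt hj)
    obtain ⟨s, hs, hsn⟩ := Finset.exists_subset_card_eq (hbad x hx)
    let l : Fin n → Set (Fin n → F) := fun i => s.equivFinOfCardEq hsn |>.symm i
    have hl : ∀ i, l i ∈ (linesThrough 𝔏 x).filter (VanishesOnLine ι p) := fun i =>
      hs (Subtype.prop _)
    simp only [Finset.mem_filter, mem_linesThrough] at hl
    have hinj : Function.Injective l :=
      Subtype.val_injective.comp (s.equivFinOfCardEq hsn).symm.injective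
    exact eval_pderiv_eq_zero_of_formsJoint
      (hgen l x hinj (fun i => (hl i).1.1) fun i => (hl i).1.2) (fun i => (hl i).2) j
  have hdeg : p.totalDegree ≠ 0 := fun h0 => by
    obtain ⟨x, hx⟩ := hT
    rw [totalDegree_eq_zero_iff_eq_C] at h0
    have := hpT x hx
    rw [h0, eval_C] at this
    exact hp (h0.trans (by rw [this, C_0]))
  obtain ⟨r, hr, hrdeg, hrp⟩ := exists_totalDegree_lt_of_pderiv_eq_zero hdeg hpderiv
  exact (hmin r hr fun x hx => hrp _ (hpT x hx)).not_gt hrdeg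

variable (ι) in
theorem exists_minimal_totalDegree_eval_eq_zero {J : Finset (Fin n → F)} {k : ℕ}
    (hJ : J.card < (k + 1) ^ n) :
    ∃ p : MvPolynomial (Fin n) K, p ≠ 0 ∧ (∀ x ∈ J, eval (ι ∘ x) p = 0) ∧
      p.totalDegree ≤ n * k ∧ ∀ q : MvPolynomial (Fin n) K, q ≠ 0 →
        (∀ x ∈ J, eval (ι ∘ x) q = 0) → p.totalDegree ≤ q.totalDegree := by
  obtain ⟨p₀, hp₀, hp₀deg, hp₀J⟩ := exists_ne_zero_totalDegree_le_eval_eq_zero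
    (J.image (ι ∘ ·)) (k := k) (by simpa using Finset.card_image_le.trans_lt hJ)
  obtain ⟨p, ⟨hp, hpJ⟩, hmin⟩ := (InvImage.wf totalDegree wellFounded_lt).has_min
    {q : MvPolynomial (Fin n) K | q ≠ 0 ∧ ∀ x ∈ J, eval (ι ∘ x) q = 0}
    ⟨p₀, hp₀, fun x hx => hp₀J _ (Finset.mem_image_of_mem _ hx)⟩
  have hmin' : ∀ q : MvPolynomial (Fin n) K, q ≠ 0 → (∀ x ∈ J, eval (ι ∘ x) q = 0) →
      p.totalDegree ≤ q.totalDegree := fun q hq hqJ => not_lt.mp (hmin q ⟨hq, hqJ⟩)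
  refine ⟨p, hp, hpJ, ?_, hmin'⟩
  simpa using (hmin' p₀ hp₀ fun x hx => hp₀J _ (Finset.mem_image_of_mem _ hx)).trans hp₀deg

end Selection

open MvPolynomial in
theorem exists_selection_of_card_lt_pow {F : Type*} [Field F] {n : ℕ} {𝔏 : Finset (Set (Fin n → F))}
    (hgen : Generic F (↑𝔏 : Set (Set (Fin n → F)))) (k : ℕ) (J : Finset (Fin n → F))
    (hJ : J.card < (k + 1) ^ n) :
    ∃ S : (Fin n → F) → Finset (Set (Fin n → F)),
      (∀ x ∈ J, S x ⊆ linesThrough 𝔏 x ∧ (linesThrough 𝔏 x).card < (S x).card + n) ∧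
      ∀ l, (J.filter (l ∈ S ·)).card ≤ n * k := by
  induction J using Finset.strongInduction with
  | H J ih =>
  rcases J.eq_empty_or_nonempty with rfl | hJne
  · exact ⟨fun _ => ∅, by simp, by simp⟩
  set ι := algebraMap F (AlgebraicClosure F)
  obtain ⟨p, hp, hpJ, hpdeg, hmin⟩ := exists_minimal_totalDegree_eval_eq_zero ι hJ
  obtain ⟨x₀, hx₀, hgood⟩ := exists_mem_card_vanishesOnLine_lt hgen hJne hp hpJ hmin
  obtain ⟨S, hS, hload⟩ :=
    ih (J.erase x₀) (Finset.erase_ssubset hx₀) (Finset.card_erase_le.trans_lt hJ)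
  set S₀ := (linesThrough 𝔏 x₀).filter (¬ VanishesOnLine ι p ·) with hS₀
  have hsub : ∀ x ∈ J, Function.update S x₀ S₀ x ⊆ linesThrough 𝔏 x := fun x hx => by
    rcases eq_or_ne x x₀ with rfl | hne
    · simp [S₀, Finset.filter_subset]
    · simpa [hne] using (hS x (Finset.mem_erase.mpr ⟨hne, hx⟩)).1
  refine ⟨Function.update S x₀ S₀, fun x hx => ⟨hsub x hx, ?_⟩, fun l => ?_⟩
  · rcases eq_or_ne x x₀ with rfl | hne
    · have := Finset.card_filter_add_card_filter_not (s := linesThrough 𝔏 x) (VanishesOnLine ι p)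
      rw [Function.update_self, hS₀]
      omega
    · rw [Function.update_of_ne hne]
      exact (hS x (Finset.mem_erase.mpr ⟨hne, hx⟩)).2
  · by_cases hl : l ∈ S₀
    · refine (Finset.card_le_card fun x hx => ?_).trans
        ((card_filter_mem_le_totalDegree hpJ (Finset.mem_filter.mp hl).2).trans hpdeg)
      obtain ⟨hxJ, hlx⟩ := Finset.mem_filter.mp hx
      exact Finset.mem_filter.mpr ⟨hxJ, (mem_linesThrough.mp (hsub x hxJ hlx)).2⟩
    · refine (Finset.card_le_card fun x hx => ?_).trans (hload l)
      obtain ⟨hxJ, hlx⟩ := Finset.mem_filter.mp hx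
      have hne : x ≠ x₀ := by
        rintro rfl
        rw [Function.update_self] at hlx
        exact hl hlx
      rw [Function.update_of_ne hne] at hlx
      exact Finset.mem_filter.mpr ⟨Finset.mem_erase.mpr ⟨hne, hxJ⟩, hlx⟩

theorem lt_floor_rpow_one_div_add_one_pow (M : ℕ) {n : ℕ} (hn : n ≠ 0) :
    M < (⌊(M : ℝ) ^ (1 / (n : ℝ))⌋₊ + 1) ^ n := by
  have h := Nat.lt_floor_add_one ((M : ℝ) ^ (1 / (n : ℝ)))
  rw [one_div] at h ⊢
  rw [Real.rpow_inv_lt_iff_of_pos (by positivity) (by positivity) (by positivity),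
    Real.rpow_natCast] at h
  exact_mod_cast h

theorem one_div_mul_rpow_le_card {F : Type*} [Field F] {n : ℕ} {𝔏 : Finset (Set (Fin n → F))} {x : Fin n → F}
    {S : Finset (Set (Fin n → F))} {lam : ℝ} (hlam : 1 ≤ lam) (hx : lam ≤ jointMult F ↑𝔏 x)
    (hS : (linesThrough 𝔏 x).card < S.card + n) :
    1 / (n : ℝ) * lam ^ (1 / (n : ℝ)) ≤ S.card := by
  rcases Nat.eq_zero_or_pos n with rfl | hn
  · simp
  have hnd :=
    le_card_linesThrough 𝔏 x (Nat.cast_ne_zero.mp (zero_lt_one.trans_le (hlam.trans hx)).ne')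
  have hdS : (linesThrough 𝔏 x).card ≤ n * S.card := by nlinarith
  have hroot : lam ^ (1 / (n : ℝ)) ≤ (linesThrough 𝔏 x).card := by
    rw [one_div, Real.rpow_inv_le_iff_of_pos (by linarith) (by positivity) (by positivity),
      Real.rpow_natCast]
    exact hx.trans (by exact_mod_cast jointMult_le_card_linesThrough_pow 𝔏 x)
  rw [one_div_mul_eq_div, div_le_iff₀ (by positivity), mul_comm]
  exact hroot.trans (by exact_mod_cast hdS)

/-- For `n ≥ 3` there are constants `c > 0` and `C` depending only on `n` such that:
for any field `F`, any generic finite collection `𝔏` of lines in `F^n` and any `λ ≥ 1`,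
each point `x` of `J_λ(𝔏) = {x : N(x) ≥ λ}` can choose a set `S x` of at least
`c·λ^{1/n}` lines of `𝔏` through `x`, so that each line `l ∈ 𝔏` is chosen by at most
`C·|J_λ(𝔏)|^{1/n}` points of `J_λ(𝔏)`. -/
theorem stmt11 (n : ℕ) (hn : 3 ≤ n) :
    ∃ c C : ℝ, 0 < c ∧ ∀ (F : Type) [Field F] (𝔏 : Finset (Set (Fin n → F))),
      (∀ l ∈ 𝔏, IsLine F l) → Generic F (↑𝔏 : Set (Set (Fin n → F))) →
      ∀ lam : ℝ, 1 ≤ lam →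
      ∃ S : (Fin n → F) → Finset (Set (Fin n → F)),
        (∀ x : Fin n → F, lam ≤ (jointMult F ↑𝔏 x : ℝ) →
          S x ⊆ 𝔏 ∧ (∀ l ∈ S x, x ∈ l) ∧ c * lam ^ (1 / (n : ℝ)) ≤ ((S x).card : ℝ)) ∧
        (∀ l ∈ 𝔏,
          (Set.ncard {x : Fin n → F | lam ≤ (jointMult F ↑𝔏 x : ℝ) ∧ l ∈ S x} : ℝ) ≤
            C * (Set.ncard {x : Fin n → F | lam ≤ (jointMult F ↑𝔏 x : ℝ)} : ℝ) ^
              (1 / (n : ℝ))) := by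
  refine ⟨1 / n, n, by positivity, fun F _ 𝔏 hL hgen lam hlam => ?_⟩
  have hfin : {x : Fin n → F | lam ≤ (jointMult F ↑𝔏 x : ℝ)}.Finite :=
    (finite_setOf_jointMult_ne_zero 𝔏 hL (by omega)).subset fun x hx =>
      Nat.cast_ne_zero.mp (zero_lt_one.trans_le (hlam.trans hx)).ne'
  set J := hfin.toFinset
  obtain ⟨S, hS, hload⟩ := exists_selection_of_card_lt_pow hgen _ J
    (lt_floor_rpow_one_div_add_one_pow J.card (by omega : n ≠ 0))
  refine ⟨S, fun x hx => ?_, fun l _ => ?_⟩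
  · obtain ⟨hsub, hcard⟩ := hS x (hfin.mem_toFinset.mpr hx)
    exact ⟨hsub.trans (Finset.filter_subset _ _), fun l hl => (mem_linesThrough.mp (hsub hl)).2,
      one_div_mul_rpow_le_card hlam hx hcard⟩
  · have hJl : {x | lam ≤ (jointMult F ↑𝔏 x : ℝ) ∧ l ∈ S x} = ↑(J.filter (l ∈ S ·)) := by
      ext x; simp [J]
    rw [hJl, Set.ncard_coe_finset, Set.ncard_eq_toFinset_card _ hfin]
    calc ((J.filter (l ∈ S ·)).card : ℝ) ≤ (n * ⌊(J.card : ℝ) ^ (1 / (n : ℝ))⌋₊ : ℕ) := by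
          exact_mod_cast hload l
      _ ≤ n * (J.card : ℝ) ^ (1 / (n : ℝ)) := by
          push_cast
          exact mul_le_mul_of_nonneg_left (Nat.floor_le (by positivity)) (by positivity)
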